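/- In a finite 1-2 metric space S, if {u,v,w} is a three-point subset such that all pairwise distances within {u,v,w} equal 2 and dist(t,x)=1 for every t in {u,v,w} and every x outside {u,v,w}, then the line through u and v equals S \ {w}. -/

import Mathlib

def line {α : Type*} [MetricSpace α] (u v : α) : Set α :=
  {p | dist p u + dist u v = dist p v ∨ dist u p + dist p v = dist u v ∨
       dist u v + dist v p = dist u p}

def OneTwo (α : Type*) [MetricSpace α] : Prop :=
  ∀ x y : α, x ≠ y → dist x y = 1 ∨ dist x y = 2

def Twins {α : Type*} [MetricSpace α] (u v : α) : Prop :=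
  dist u v = 2 ∧ ∀ w : α, w ≠ u → w ≠ v → dist u w = dist v w

def linesOf (α : Type*) [MetricSpace α] : Set (Set α) :=
  {L | ∃ u v : α, u ≠ v ∧ L = line u v}

section Line

variable {α : Type*} [MetricSpace α] {u v w p : α}

theorem mem_line_of_dist_add_dist_eq (h : dist u p + dist p v = dist u v) : p ∈ line u v :=
  Or.inr (Or.inl h)

theorem left_mem_line (u v : α) : u ∈ line u v :=
  mem_line_of_dist_add_dist_eq (by simp)

theorem right_mem_line (u v : α) : v ∈ line u v :=
  mem_line_of_dist_add_dist_eq (by simp)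

theorem notMem_line_of_equilateral {d : ℝ} (hd : d ≠ 0) (huv : dist u v = d)
    (huw : dist u w = d) (hvw : dist v w = d) : w ∉ line u v := by
  rintro (h | h | h)
  · rw [dist_comm, huw, huv, dist_comm, hvw] at h
    exact hd (by linarith)
  · rw [huw, dist_comm, hvw, huv] at h
    exact hd (by linarith)
  · rw [huv, hvw, huw] at h
    exact hd (by linarith)

end Line

theorem stmt7_general {α : Type*} [MetricSpace α]
    (u v w : α)
    (h2 : dist u v = 2 ∧ dist u w = 2 ∧ dist v w = 2)
    (h1 : ∀ t x : α, t ∈ ({u, v, w} : Set α) → x ∉ ({u, v, w} : Set α) →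
      dist t x = 1) :
    line u v = Set.univ \ {w} := by
  obtain ⟨huv, huw, hvw⟩ := h2
  ext p
  simp only [Set.mem_sdiff, Set.mem_univ, Set.mem_singleton_iff, true_and]
  constructor
  · rintro hp rfl
    exact notMem_line_of_equilateral two_ne_zero huv huw hvw hp
  · intro hpw
    by_cases hpu : p = u
    · exact hpu ▸ left_mem_line u v
    by_cases hpv : p = v
    · exact hpv ▸ right_mem_line u v
    have hp : p ∉ ({u, v, w} : Set α) := by simp [hpu, hpv, hpw]
    apply mem_line_of_dist_add_dist_eq
    rw [h1 u p (by simp) hp, dist_comm, h1 v p (by simp) hp, huv]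
    norm_num

theorem stmt7 {α : Type*} [MetricSpace α] [Fintype α] (h12 : OneTwo α)
    (u v w : α) (huv : u ≠ v) (huw : u ≠ w) (hvw : v ≠ w)
    (h2 : dist u v = 2 ∧ dist u w = 2 ∧ dist v w = 2)
    (h1 : ∀ t x : α, t ∈ ({u, v, w} : Set α) → x ∉ ({u, v, w} : Set α) →
      dist t x = 1) :
    line u v = Set.univ \ {w} :=
  stmt7_general u v w h2 h1
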